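/- The commutator subgroup [W_ℝ, W_ℝ] of the Weil group W_ℝ equals the unit circle ℂ¹ = {z ∈ ℂ^× : |z| = 1}, and the reciprocity map r_ℝ : ℝ^× → W_ℝ/[W_ℝ, W_ℝ], sending x > 0 to the class of √x and x < 0 to the class of j·√(−x), is a group isomorphism onto the abelianization of W_ℝ. -/

import Mathlib

noncomputable section

open Quaternion Matrix
open scoped Classical

namespace PTB

/-- The Weil group of `ℝ`, realized inside the units of Hamilton's quaternions as
`ℂˣ ∪ ℂˣ · j`, where `ℂ = ℝ + ℝ i ⊆ ℍ`. -/
def WeilR : Subgroup (ℍ[ℝ])ˣ where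
  carrier := {w | ((w : ℍ[ℝ]).imJ = 0 ∧ (w : ℍ[ℝ]).imK = 0) ∨
    ((w : ℍ[ℝ]).re = 0 ∧ (w : ℍ[ℝ]).imI = 0)}
  one_mem' := by left; simp
  mul_mem' := by
    rintro a b (⟨h1, h2⟩ | ⟨h1, h2⟩) (⟨h3, h4⟩ | ⟨h3, h4⟩)
    · exact Or.inl ⟨by simp [Units.val_mul, Quaternion.imJ_mul, h1, h2, h3, h4],
        by simp [Units.val_mul, Quaternion.imK_mul, h1, h2, h3, h4]⟩
    · exact Or.inr ⟨by simp [Units.val_mul, Quaternion.re_mul, h1, h2, h3, h4],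
        by simp [Units.val_mul, Quaternion.imI_mul, h1, h2, h3, h4]⟩
    · exact Or.inr ⟨by simp [Units.val_mul, Quaternion.re_mul, h1, h2, h3, h4],
        by simp [Units.val_mul, Quaternion.imI_mul, h1, h2, h3, h4]⟩
    · exact Or.inl ⟨by simp [Units.val_mul, Quaternion.imJ_mul, h1, h2, h3, h4],
        by simp [Units.val_mul, Quaternion.imK_mul, h1, h2, h3, h4]⟩
  inv_mem' := by
    rintro a (⟨h1, h2⟩ | ⟨h1, h2⟩)
    · exact Or.inl ⟨by simp [Units.val_inv_eq_inv_val, Quaternion.inv_def, h1, h2],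
        by simp [Units.val_inv_eq_inv_val, Quaternion.inv_def, h1, h2]⟩
    · exact Or.inr ⟨by simp [Units.val_inv_eq_inv_val, Quaternion.inv_def, h1, h2],
        by simp [Units.val_inv_eq_inv_val, Quaternion.inv_def, h1, h2]⟩

/-- The complex number `z` with `w = z ∈ ℂ ⊆ ℍ` (for `w` with `imJ = imK = 0`). -/
def zC (w : ℍ[ℝ]) : ℂ := ⟨w.re, w.imI⟩

/-- The complex number `z` with `w = z·j` (for `w` with `re = imI = 0`). -/
def zJ (w : ℍ[ℝ]) : ℂ := ⟨w.imJ, w.imK⟩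

/-- The character `θ_{k,λ}(z) = (z/|z|)^k |z|^{2λ}` of `ℂˣ`. -/
def theta (k : ℤ) (l : ℂ) (z : ℂ) : ℂ :=
  (z / ((‖z‖ : ℝ) : ℂ)) ^ k * ((‖z‖ : ℝ) : ℂ) ^ (2 * l)

/-- The character `φ^{(1)}_{k,λ}` of the Weil group: `z ↦ |z|^{2λ}` on `ℂˣ` and `j ↦ (-1)^k`. -/
def phi1 (k : ℤ) (l : ℂ) (w : (ℍ[ℝ])ˣ) : ℂ :=
  if (w : ℍ[ℝ]).imJ = 0 ∧ (w : ℍ[ℝ]).imK = 0 then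
    ((‖zC (w : ℍ[ℝ])‖ : ℝ) : ℂ) ^ (2 * l)
  else (-1 : ℂ) ^ k * ((‖zJ (w : ℍ[ℝ])‖ : ℝ) : ℂ) ^ (2 * l)

/-- The two-dimensional representation `φ^{(2)}_{k,λ} = Ind_{ℂˣ}^{W_ℝ} θ_{k,λ}` of the Weil
group, in the model where `z ∈ ℂˣ` acts by `diag(θ_{k,λ}(z), θ_{k,λ}(z̄))` and `j` acts by
`[[0, (-1)^k], [1, 0]]`. -/
def phi2 (k : ℤ) (l : ℂ) (w : (ℍ[ℝ])ˣ) : Matrix (Fin 2) (Fin 2) ℂ :=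
  if (w : ℍ[ℝ]).imJ = 0 ∧ (w : ℍ[ℝ]).imK = 0 then
    !![theta k l (zC (w : ℍ[ℝ])), 0; 0, theta k l (starRingEnd ℂ (zC (w : ℍ[ℝ])))]
  else
    !![0, (-1 : ℂ) ^ k * theta k l (zJ (w : ℍ[ℝ]));
       theta k l (starRingEnd ℂ (zJ (w : ℍ[ℝ]))), 0]



/-- The "signed norm" `re² + imI² − imJ² − imK²`; on `W_ℝ` this is the map
`z ↦ |z|²`, `z·j ↦ −|z|²`, which is multiplicative on `W_ℝ`. -/
def fW (q : ℍ[ℝ]) : ℝ := q.re ^ 2 + q.imI ^ 2 - q.imJ ^ 2 - q.imK ^ 2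

lemma fW_mul {a b : ℍ[ℝ]}
    (ha : (a.imJ = 0 ∧ a.imK = 0) ∨ (a.re = 0 ∧ a.imI = 0))
    (hb : (b.imJ = 0 ∧ b.imK = 0) ∨ (b.re = 0 ∧ b.imI = 0)) :
    fW (a * b) = fW a * fW b := by
  rcases ha with ⟨h1, h2⟩ | ⟨h1, h2⟩ <;> rcases hb with ⟨h3, h4⟩ | ⟨h3, h4⟩ <;>
    simp only [fW, Quaternion.re_mul, Quaternion.imI_mul, Quaternion.imJ_mul,
      Quaternion.imK_mul, h1, h2, h3, h4] <;> ring

lemma mem_weilR_iff (w : (ℍ[ℝ])ˣ) : w ∈ WeilR ↔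
    (((w : ℍ[ℝ]).imJ = 0 ∧ (w : ℍ[ℝ]).imK = 0) ∨
      ((w : ℍ[ℝ]).re = 0 ∧ (w : ℍ[ℝ]).imI = 0)) := Iff.rfl

lemma fW_ne_zero (w : WeilR) : fW ((w : (ℍ[ℝ])ˣ) : ℍ[ℝ]) ≠ 0 := by
  have hq : ((w : (ℍ[ℝ])ˣ) : ℍ[ℝ]) ≠ 0 := Units.ne_zero _
  have hns : Quaternion.normSq ((w : (ℍ[ℝ])ˣ) : ℍ[ℝ]) ≠ 0 :=
    Quaternion.normSq_ne_zero.mpr hq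
  rw [Quaternion.normSq_def'] at hns
  rcases (mem_weilR_iff _).mp w.2 with ⟨h1, h2⟩ | ⟨h1, h2⟩ <;>
    simp only [h1, h2] at hns <;> simp only [fW, h1, h2] <;>
    intro h <;> exact hns (by linarith)

/-- The transfer homomorphism `t : W_ℝ →* ℝˣ`, `z ↦ |z|²`, `z·j ↦ −|z|²`. -/
def tW : WeilR →* ℝˣ where
  toFun w := Units.mk0 (fW ((w : (ℍ[ℝ])ˣ) : ℍ[ℝ])) (fW_ne_zero w)
  map_one' := by
    apply Units.ext
    simp [fW]
  map_mul' a b := by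
    apply Units.ext
    have : (((a * b : WeilR) : (ℍ[ℝ])ˣ) : ℍ[ℝ]) =
        ((a : (ℍ[ℝ])ˣ) : ℍ[ℝ]) * ((b : (ℍ[ℝ])ˣ) : ℍ[ℝ]) := rfl
    simpa [this] using fW_mul ((mem_weilR_iff _).mp a.2) ((mem_weilR_iff _).mp b.2)

lemma tW_eq_one_iff (w : WeilR) : tW w = 1 ↔
    (((w : (ℍ[ℝ])ˣ) : ℍ[ℝ]).imJ = 0 ∧ ((w : (ℍ[ℝ])ˣ) : ℍ[ℝ]).imK = 0 ∧
      Quaternion.normSq ((w : (ℍ[ℝ])ˣ) : ℍ[ℝ]) = 1) := by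
  set q : ℍ[ℝ] := ((w : (ℍ[ℝ])ˣ) : ℍ[ℝ]) with hqdef
  rw [Units.ext_iff]
  show fW q = 1 ↔ _
  rw [Quaternion.normSq_def']
  constructor
  · intro h
    rcases (mem_weilR_iff _).mp w.2 with ⟨h1, h2⟩ | ⟨h1, h2⟩ <;> rw [← hqdef] at h1 h2
    · refine ⟨h1, h2, ?_⟩
      simp only [fW, h1, h2] at h ⊢
      linarith
    · exfalso
      simp only [fW, h1, h2] at h
      nlinarith [sq_nonneg q.imJ, sq_nonneg q.imK]
  · rintro ⟨h1, h2, h3⟩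
    simp only [fW, h1, h2] at h3 ⊢
    linarith

open scoped commutatorElement in
set_option maxHeartbeats 1000000 in
lemma circle_mem_commutator (w : WeilR)
    (h1 : ((w : (ℍ[ℝ])ˣ) : ℍ[ℝ]).imJ = 0) (h2 : ((w : (ℍ[ℝ])ˣ) : ℍ[ℝ]).imK = 0)
    (h3 : Quaternion.normSq ((w : (ℍ[ℝ])ˣ) : ℍ[ℝ]) = 1) :
    w ∈ commutator WeilR := by
  set q : ℍ[ℝ] := ((w : (ℍ[ℝ])ˣ) : ℍ[ℝ]) with hqdef
  rw [Quaternion.normSq_def', h1, h2] at h3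
  -- find a complex square root u of the conjugate of q's complex value
  obtain ⟨u, hu⟩ := IsAlgClosed.exists_pow_nat_eq (⟨q.re, -q.imI⟩ : ℂ) (n := 2) two_pos
  set a : ℝ := u.re with ha
  set b : ℝ := u.im with hb
  have hure : a ^ 2 - b ^ 2 = q.re := by
    have := congrArg Complex.re hu
    simpa [pow_two, Complex.mul_re, ha, hb, sq] using this
  have huim : 2 * (a * b) = -q.imI := by
    have := congrArg Complex.im hu
    simp only [pow_two, Complex.mul_im] at this
    simpa [ha, hb] using by linarith [this]
  have hns : a ^ 2 + b ^ 2 = 1 := by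
    have h4 : Complex.normSq (u ^ 2) = 1 := by
      rw [hu]
      simp only [Complex.normSq_apply]
      nlinarith
    rw [map_pow] at h4
    have h5 : (0:ℝ) ≤ Complex.normSq u := Complex.normSq_nonneg u
    have h6 : Complex.normSq u = 1 := by
      have h7 : (Complex.normSq u - 1) * (Complex.normSq u + 1) = 0 := by
        linear_combination h4
      rcases mul_eq_zero.mp h7 with h8 | h8
      · linarith
      · linarith
    rw [Complex.normSq_apply] at h6
    nlinarith [h6]
  -- build the elements U = a + b i and J = j of the Weil group
  have hUne : (⟨a, b, 0, 0⟩ : ℍ[ℝ]) ≠ 0 := by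
    apply Quaternion.normSq_ne_zero.mp
    erw [Quaternion.normSq_def']
    show a ^ 2 + b ^ 2 + 0 ^ 2 + 0 ^ 2 ≠ 0
    rw [hns]; norm_num
  have hJne : (⟨0, 0, 1, 0⟩ : ℍ[ℝ]) ≠ 0 := by
    apply Quaternion.normSq_ne_zero.mp
    erw [Quaternion.normSq_def']
    show (0:ℝ) ^ 2 + 0 ^ 2 + 1 ^ 2 + 0 ^ 2 ≠ 0
    norm_num
  set Uq : ℍ[ℝ] := (⟨a, b, 0, 0⟩ : ℍ[ℝ]) with hUq
  set Jq : ℍ[ℝ] := (⟨0, 0, 1, 0⟩ : ℍ[ℝ]) with hJq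
  set U : (ℍ[ℝ])ˣ := Units.mk0 _ hUne with hUdef
  set J : (ℍ[ℝ])ˣ := Units.mk0 _ hJne with hJdef
  have hUmem : U ∈ WeilR := Or.inl ⟨rfl, rfl⟩
  have hJmem : J ∈ WeilR := Or.inr ⟨rfl, rfl⟩
  set gU : WeilR := ⟨U, hUmem⟩ with hgU
  set gJ : WeilR := ⟨J, hJmem⟩ with hgJ
  -- the key identity in the quaternions: q · U · J = J · U
  have hquat : q * Uq * Jq = Jq * Uq := by
    ext <;>
      simp only [Quaternion.re_mul, Quaternion.imI_mul, Quaternion.imJ_mul,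
        Quaternion.imK_mul, h1, h2] <;> simp only [hUq, hJq]
    all_goals rw [← hure, show q.imI = -(2*(a*b)) from by linarith]
    all_goals ring_nf
    · linear_combination a * hns
    · linear_combination (-b) * hns
  -- lift to an identity among units
  have hunit : (w : (ℍ[ℝ])ˣ) * U * J = J * U := by
    apply Units.ext
    exact hquat
  have hcomm : w = ⁅gJ, gU⁆ := by
    have h9 : (w : (ℍ[ℝ])ˣ) = ⁅(gJ : (ℍ[ℝ])ˣ), (gU : (ℍ[ℝ])ˣ)⁆ := by
      rw [commutatorElement_def]
      show (w : (ℍ[ℝ])ˣ) = J * U * J⁻¹ * U⁻¹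
      rw [← hunit]
      group
    exact Subtype.ext h9
  rw [hcomm, commutator_def]
  exact Subgroup.commutator_mem_commutator (Subgroup.mem_top _) (Subgroup.mem_top _)

lemma tW_surjective : Function.Surjective tW := by
  intro x
  rcases lt_or_gt_of_ne (fun h : (x : ℝ) = 0 => x.ne_zero h) with hx | hx
  · -- x < 0 : use √(-x)·j
    have hne : (⟨0, 0, Real.sqrt (-(x : ℝ)), 0⟩ : ℍ[ℝ]) ≠ 0 := by
      apply Quaternion.normSq_ne_zero.mp
      erw [Quaternion.normSq_def']
      show (0:ℝ) ^ 2 + 0 ^ 2 + Real.sqrt (-(x:ℝ)) ^ 2 + 0 ^ 2 ≠ 0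
      rw [Real.sq_sqrt (by linarith)]
      simp only [ne_eq, neg_neg]
      exact fun h => x.ne_zero (by linarith)
    refine ⟨⟨Units.mk0 _ hne, Or.inr ⟨rfl, rfl⟩⟩, ?_⟩
    apply Units.ext
    show fW _ = (x : ℝ)
    show (0:ℝ) ^ 2 + 0 ^ 2 - Real.sqrt (-(x:ℝ)) ^ 2 - 0 ^ 2 = (x : ℝ)
    rw [Real.sq_sqrt (by linarith)]
    ring
  · -- x > 0 : use √x
    have hne : (((Real.sqrt (x : ℝ) : ℝ)) : ℍ[ℝ]) ≠ 0 := by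
      simpa using Quaternion.coe_injective.ne
        ((Real.sqrt_ne_zero (le_of_lt hx)).mpr (ne_of_gt hx))
    refine ⟨⟨Units.mk0 _ hne, Or.inl ⟨by simp, by simp⟩⟩, ?_⟩
    apply Units.ext
    show fW _ = (x : ℝ)
    simp only [fW, Units.val_mk0, Quaternion.re_coe, Quaternion.imI_coe, Quaternion.imJ_coe,
      Quaternion.imK_coe]
    rw [Real.sq_sqrt (le_of_lt hx)]
    ring

/-- The commutator subgroup of the Weil group `W_ℝ` equals the unit circle
`ℂ¹ = {z ∈ ℂˣ : |z| = 1}` (inside `ℂˣ ⊆ W_ℝ`, described by `imJ = imK = 0` and `normSq = 1`),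
and the reciprocity map `r_ℝ : ℝˣ → W_ℝ^{ab}`, sending `x > 0` to the class of `√x` and
`x < 0` to the class of `j·√(-x)`, is a group isomorphism onto the abelianization of `W_ℝ`. -/
theorem weilR_commutator_and_reciprocity :
    ((commutator WeilR : Subgroup WeilR) : Set WeilR) =
      {w : WeilR | ((w : (ℍ[ℝ])ˣ) : ℍ[ℝ]).imJ = 0 ∧ ((w : (ℍ[ℝ])ˣ) : ℍ[ℝ]).imK = 0 ∧
        Quaternion.normSq ((w : (ℍ[ℝ])ˣ) : ℍ[ℝ]) = 1} ∧
    ∃ e : ℝˣ ≃* Abelianization WeilR, ∀ (x : ℝˣ) (w : WeilR),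
      (0 < (x : ℝ) → ((w : (ℍ[ℝ])ˣ) : ℍ[ℝ]) = ((Real.sqrt (x : ℝ) : ℝ) : ℍ[ℝ]) →
        e x = Abelianization.of w) ∧
      ((x : ℝ) < 0 → ((w : (ℍ[ℝ])ˣ) : ℍ[ℝ]) = (⟨0, 0, Real.sqrt (-(x : ℝ)), 0⟩ : ℍ[ℝ]) →
        e x = Abelianization.of w) := by
  have hsub1 : commutator WeilR ≤ tW.ker := Abelianization.commutator_subset_ker tW
  have hcker : ∀ w : WeilR, w ∈ commutator WeilR ↔ tW w = 1 := by
    intro w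
    constructor
    · exact fun h => hsub1 h
    · intro h
      obtain ⟨h1, h2, h3⟩ := (tW_eq_one_iff w).mp h
      exact circle_mem_commutator w h1 h2 h3
  constructor
  · ext w
    rw [SetLike.mem_coe, hcker w, tW_eq_one_iff w]
    rfl
  · -- the isomorphism
    set L : Abelianization WeilR →* ℝˣ := Abelianization.lift tW with hL
    have hinj : Function.Injective L := by
      rw [injective_iff_map_eq_one]
      intro x hx
      refine QuotientGroup.induction_on x ?_ hx
      intro z hz
      have hz' : tW z = 1 := hz
      have hzmem : z ∈ commutator WeilR := (hcker z).mpr hz'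
      exact (QuotientGroup.eq_one_iff z).mpr hzmem
    have hsurj : Function.Surjective L := by
      intro x
      obtain ⟨w, hw⟩ := tW_surjective x
      exact ⟨Abelianization.of w, by simpa [hL, Abelianization.lift_apply_of] using hw⟩
    set E : Abelianization WeilR ≃* ℝˣ := MulEquiv.ofBijective L ⟨hinj, hsurj⟩ with hE
    refine ⟨E.symm, ?_⟩
    intro x w
    have key : tW w = x → E.symm x = Abelianization.of w := by
      intro htw
      rw [MulEquiv.symm_apply_eq]
      show x = L (Abelianization.of w)
      rw [Abelianization.lift_apply_of, htw]
    constructor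
    · intro hx hval
      apply key
      apply Units.ext
      show fW _ = (x : ℝ)
      rw [hval]
      simp only [fW, Quaternion.re_coe, Quaternion.imI_coe, Quaternion.imJ_coe,
        Quaternion.imK_coe]
      rw [Real.sq_sqrt (le_of_lt hx)]
      ring
    · intro hx hval
      apply key
      apply Units.ext
      show fW _ = (x : ℝ)
      rw [hval]
      show (0:ℝ) ^ 2 + 0 ^ 2 - Real.sqrt (-(x:ℝ)) ^ 2 - 0 ^ 2 = (x : ℝ)
      rw [Real.sq_sqrt (by linarith)]
      ring

end PTB
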